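/- arXiv:2107.02724 — 8 statements merged into one kernel-verified Lean document; each statement's English description precedes it below -/
import Mathlib

section
/- Let k, l ≥ 2 be integers and let p be a prime. Then ν_p((k!)^l · l!) ≤ ν_p((kl)!), and equality holds if and only if at least one of the following holds: (a) k is a power of p; (b) s_p(kl) = l · s_p(k), i.e., there are no carry operations in the l-term addition k + ⋯ + k when k is written in base p. -/
/-!
Legendre's formula `(p - 1) ν_p(n!) = n - s_p(n)` turns everything into digit sums.
The quotient `W(k, l) = (kl)! / ((k!)^l l!)` is the integer `∏_{i<l} C(k(i+1) - 1, k - 1)`, which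
gives the inequality with defect `ν_p(W(k, l))`, and
`(p - 1) ν_p(W(k, l)) = l s_p(k) + s_p(l) - s_p(kl) - l`.
If `l < p` then `s_p(l) = l`, so the defect vanishes exactly when `s_p(kl) = l s_p(k)`.
If `l ≥ p` then `W(k, p) ∣ W(k, l)`, and at `l = p` the identity reads
`(p - 1) ν_p(W(k, p)) = (p - 1)(s_p(k) - 1)`, so a vanishing defect forces `s_p(k) = 1`,
i.e. `k` is a power of `p`. Conversely `k = p^i` gives `s_p(k) = 1` and `s_p(kl) = s_p(l)`.
-/

open Nat Finset

-- `W(k, l)` counts the partitions of `kl` points into `l` blocks of size `k`: when `k(i+1)` points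
-- are left, `C(k(i+1) - 1, k - 1)` chooses the block of the least of them.
def wreathIndex (k l : ℕ) : ℕ := ∏ i ∈ range l, (k * (i + 1) - 1).choose (k - 1)

lemma wreathIndex_ne_zero (k l : ℕ) : wreathIndex k l ≠ 0 :=
  prod_ne_zero_iff.mpr fun i _ ↦ (choose_pos (by grind)).ne'

lemma wreathIndex_dvd_wreathIndex (k : ℕ) {m l : ℕ} (h : m ≤ l) :
    wreathIndex k m ∣ wreathIndex k l :=
  prod_dvd_prod_of_subset _ _ _ (range_subset_range.mpr h)

lemma choose_mul_add_one {k : ℕ} (hk : 0 < k) (l : ℕ) :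
    (k * (l + 1)).choose k = (l + 1) * (k * (l + 1) - 1).choose (k - 1) := by
  have h := add_one_mul_choose_eq (k * (l + 1) - 1) (k - 1)
  rw [Nat.sub_add_cancel (by nlinarith), Nat.sub_add_cancel hk] at h
  apply Nat.eq_of_mul_eq_mul_right hk
  rw [← h]; ring

lemma factorial_pow_mul_factorial_mul_wreathIndex {k : ℕ} (hk : 0 < k) (l : ℕ) :
    k ! ^ l * l ! * wreathIndex k l = (k * l)! := by
  induction l with
  | zero => simp [wreathIndex]
  | succ l ih =>
    rw [wreathIndex, prod_range_succ, ← wreathIndex, _root_.mul_add_one k l,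
      ← add_choose_mul_factorial_mul_factorial (k * l) k, ← ih, ← _root_.mul_add_one,
      choose_mul_add_one hk, factorial_succ]
    ring

namespace Nat

variable {b : ℕ}

lemma digits_sum_of_lt {n : ℕ} (h : n < b) : (b.digits n).sum = n := by
  rcases eq_or_ne n 0 with rfl | hn
  · simp
  · simp [digits_of_lt b n hn h]

lemma digits_sum_pos {n : ℕ} (hn : n ≠ 0) : 0 < (b.digits n).sum :=
  (pos_of_ne_zero (getLast_digit_ne_zero b hn)).trans_le
    (List.le_sum_of_mem (List.getLast_mem _))

lemma digits_sum_base_pow_mul (hb : 1 < b) (i m : ℕ) :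
    (b.digits (b ^ i * m)).sum = (b.digits m).sum := by
  rcases eq_or_ne m 0 with rfl | hm
  · simp
  · simp [digits_base_pow_mul hb (pos_of_ne_zero hm)]

lemma digits_sum_eq_one_iff (hb : 1 < b) {n : ℕ} : (b.digits n).sum = 1 ↔ ∃ i, n = b ^ i := by
  refine ⟨fun h ↦ ?_, ?_⟩
  · induction n using Nat.strong_induction_on with
    | _ n ih =>
      have hn : n ≠ 0 := by rintro rfl; simp at h
      rw [digits_def' hb (pos_of_ne_zero hn), List.sum_cons] at h
      rcases eq_or_ne (n / b) 0 with hq | hq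
      · exact ⟨0, by rw [← Nat.mod_add_div n b]; simp_all⟩
      · obtain ⟨i, hi⟩ := ih (n / b) (div_lt_self (pos_of_ne_zero hn) hb)
          (by have := digits_sum_pos (b := b) hq; omega)
        refine ⟨i + 1, ?_⟩
        rw [← Nat.mod_add_div n b, hi]
        have := digits_sum_pos (b := b) hq
        rw [show n % b = 0 by omega, pow_succ]; ring
  · rintro ⟨i, rfl⟩
    rw [← mul_one (b ^ i), digits_sum_base_pow_mul hb, digits_sum_of_lt hb]

end Nat

section Padic
variable {p : ℕ} [hp : Fact p.Prime]

lemma padicValNat_le_of_dvd {a b : ℕ} (hb : b ≠ 0) (h : a ∣ b) :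
    padicValNat p a ≤ padicValNat p b :=
  (padicValNat_dvd_iff_le hb).mp (pow_padicValNat_dvd.trans h)

lemma sub_one_mul_padicValNat_factorial_add_digits_sum (n : ℕ) :
    (p - 1) * padicValNat p n ! + (p.digits n).sum = n := by
  rw [sub_one_mul_padicValNat_factorial, Nat.sub_add_cancel (digit_sum_le p n)]

lemma padicValNat_factorial_mul_eq_add_wreathIndex {k : ℕ} (hk : 0 < k) (l : ℕ) :
    padicValNat p (k * l)! = padicValNat p (k ! ^ l * l !) + padicValNat p (wreathIndex k l) := by
  rw [← factorial_pow_mul_factorial_mul_wreathIndex hk,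
    padicValNat.mul (by positivity) (wreathIndex_ne_zero k l)]

lemma sub_one_mul_padicValNat_wreathIndex_add {k : ℕ} (hk : 0 < k) (l : ℕ) :
    (p - 1) * padicValNat p (wreathIndex k l) + (p.digits (k * l)).sum + l =
      l * (p.digits k).sum + (p.digits l).sum := by
  have hkl := padicValNat_factorial_mul_eq_add_wreathIndex (p := p) hk l
  rw [padicValNat.mul (by positivity) (by positivity), padicValNat.pow] at hkl
  have hkl' := sub_one_mul_padicValNat_factorial_add_digits_sum (p := p) (k * l)
  have hk' := sub_one_mul_padicValNat_factorial_add_digits_sum (p := p) k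
  have hl' := sub_one_mul_padicValNat_factorial_add_digits_sum (p := p) l
  generalize p - 1 = q at *
  zify at *
  linear_combination -q * hkl + hkl' - l * hk' - hl'

lemma exists_eq_pow_of_padicValNat_wreathIndex_eq_zero {k : ℕ} (hk : 0 < k)
    (h : padicValNat p (wreathIndex k p) = 0) : ∃ i, k = p ^ i := by
  have hp1 := hp.out.one_lt
  have hW := sub_one_mul_padicValNat_wreathIndex_add (p := p) hk p
  have hkp : (p.digits (k * p)).sum = (p.digits k).sum := by
    simpa [mul_comm] using digits_sum_base_pow_mul hp1 1 k
  rw [h, mul_zero, zero_add, hkp, (digits_sum_eq_one_iff hp1).mpr ⟨1, (pow_one p).symm⟩] at hW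
  have := digits_sum_pos (b := p) hk.ne'
  exact (digits_sum_eq_one_iff hp1).mp (by nlinarith)

lemma padicValNat_wreathIndex_eq_zero_iff {k : ℕ} (hk : 0 < k) (l : ℕ) :
    padicValNat p (wreathIndex k l) = 0 ↔
      (∃ i, k = p ^ i) ∨ (p.digits (k * l)).sum = l * (p.digits k).sum := by
  have hp1 := hp.out.one_lt
  have hW := sub_one_mul_padicValNat_wreathIndex_add (p := p) hk l
  have of_mul_eq_zero (h : (p - 1) * padicValNat p (wreathIndex k l) = 0) :
      padicValNat p (wreathIndex k l) = 0 :=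
    (Nat.mul_eq_zero.mp h).resolve_left (by omega)
  constructor
  · intro h
    by_cases hlp : l < p
    · rw [h, digits_sum_of_lt hlp] at hW
      exact Or.inr (by omega)
    · refine Or.inl (exists_eq_pow_of_padicValNat_wreathIndex_eq_zero hk ?_)
      exact Nat.eq_zero_of_le_zero <| h ▸
        padicValNat_le_of_dvd (wreathIndex_ne_zero k l) (wreathIndex_dvd_wreathIndex k (by omega))
  · rintro (⟨i, rfl⟩ | h)
    · rw [digits_sum_base_pow_mul hp1, (digits_sum_eq_one_iff hp1).mpr ⟨i, rfl⟩] at hW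
      exact of_mul_eq_zero (by omega)
    · have := digit_sum_le p l
      rw [h] at hW
      exact of_mul_eq_zero (by omega)

end Padic

theorem padicValNat_wreath_le_and_equality_iff_general
    (k l : ℕ) (hk : 2 ≤ k) (p : ℕ) (hp : p.Prime) :
    padicValNat p ((Nat.factorial k) ^ l * Nat.factorial l) ≤ padicValNat p (Nat.factorial (k * l)) ∧
    (padicValNat p ((Nat.factorial k) ^ l * Nat.factorial l) = padicValNat p (Nat.factorial (k * l))
      ↔ (∃ i : ℕ, k = p ^ i) ∨ (Nat.digits p (k * l)).sum = l * (Nat.digits p k).sum) := by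
  have := Fact.mk hp
  rw [padicValNat_factorial_mul_eq_add_wreathIndex (by omega) l,
    ← padicValNat_wreathIndex_eq_zero_iff (by omega) l]
  exact ⟨le_add_right le_rfl, by omega⟩

theorem padicValNat_wreath_le_and_equality_iff
    (k l : ℕ) (hk : 2 ≤ k) (hl : 2 ≤ l) (p : ℕ) (hp : p.Prime) :
    padicValNat p ((Nat.factorial k) ^ l * Nat.factorial l) ≤ padicValNat p (Nat.factorial (k * l)) ∧
    (padicValNat p ((Nat.factorial k) ^ l * Nat.factorial l) = padicValNat p (Nat.factorial (k * l))
      ↔ (∃ i : ℕ, k = p ^ i) ∨ (Nat.digits p (k * l)).sum = l * (Nat.digits p k).sum) :=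
  padicValNat_wreath_le_and_equality_iff_general k l hk p hp
end

section
/- For all integers 0 ≤ m ≤ n, the number n − m divides D_n − (−1)^{n−m} D_m (as integers). -/
lemma numDerangements_aux (k m : ℕ) :
    (k : ℤ) ∣ ((numDerangements (m + k) : ℤ) - (-1) ^ k * (numDerangements m : ℤ)) := by
  induction m with
  | zero =>
    cases k with
    | zero => simp
    | succ j =>
      refine ⟨numDerangements j, ?_⟩
      have h := numDerangements_succ j
      simp only [Nat.zero_add, numDerangements_zero]
      push_cast at h ⊢
      linear_combination h
  | succ m ih =>
    obtain ⟨c, hc⟩ := ih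
    refine ⟨(m + 1) * c + numDerangements (m + k), ?_⟩
    have h1 := numDerangements_succ (m + k)
    have h2 := numDerangements_succ m
    have e : m + 1 + k = m + k + 1 := by ring
    rw [e, h1, h2]
    push_cast at hc ⊢
    linear_combination ((m : ℤ) + 1) * hc

theorem numDerangements_congruence (m n : ℕ) (h : m ≤ n) :
    ((n : ℤ) - m) ∣ ((numDerangements n : ℤ) - (-1) ^ (n - m) * (numDerangements m : ℤ)) := by
  have e : m + (n - m) = n := by omega
  have := numDerangements_aux (n - m) m
  rw [e] at this
  have ec : ((n : ℤ) - m) = ((n - m : ℕ) : ℤ) := by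
    push_cast [Nat.cast_sub h]; ring
  rw [ec]
  exact this
end

section
/- For every n ≥ 1, n divides D_n − (−1)^n; for every n ≥ 3, n − 2 divides D_n − (−1)^n; and for every n ≥ 4, n − 3 divides D_n − 2·(−1)^{n−1} (all as integers). -/
theorem numDerangements_special_congruences :
    (∀ n : ℕ, 1 ≤ n → (n : ℤ) ∣ ((numDerangements n : ℤ) - (-1) ^ n)) ∧
    (∀ n : ℕ, 3 ≤ n → ((n : ℤ) - 2) ∣ ((numDerangements n : ℤ) - (-1) ^ n)) ∧
    (∀ n : ℕ, 4 ≤ n → ((n : ℤ) - 3) ∣ ((numDerangements n : ℤ) - 2 * (-1) ^ (n - 1))) := by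
  refine ⟨?_, ?_, ?_⟩
  · intro n hn
    obtain ⟨k, rfl⟩ := Nat.exists_eq_add_of_le hn
    refine ⟨(numDerangements k : ℤ), ?_⟩
    rw [show 1 + k = k + 1 by ring, numDerangements_succ]
    push_cast
    ring
  · intro n hn
    obtain ⟨k, rfl⟩ := Nat.exists_eq_add_of_le hn
    refine ⟨(k + 3) * (k + 2) * (numDerangements k : ℤ) - (k + 3) * (-1) ^ k, ?_⟩
    rw [show 3 + k = k + 3 from by ring]
    rw [show (k:ℕ) + 3 = (k+2) + 1 from rfl, numDerangements_succ,
      show (k:ℕ) + 2 = (k+1) + 1 from rfl, numDerangements_succ, numDerangements_succ]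
    push_cast
    ring
  · intro n hn
    obtain ⟨k, rfl⟩ := Nat.exists_eq_add_of_le hn
    refine ⟨(k + 4) * (k + 3) * (k + 2) * (numDerangements k : ℤ)
        + (-(k:ℤ)^2 - 7*k - 13) * (-1) ^ k, ?_⟩
    rw [show 4 + k = k + 4 from by ring, show (k + 4) - 1 = k + 3 from rfl]
    rw [show (k:ℕ) + 4 = (k+3) + 1 from rfl, numDerangements_succ,
      show (k:ℕ) + 3 = (k+2) + 1 from rfl, numDerangements_succ,
      show (k:ℕ) + 2 = (k+1) + 1 from rfl, numDerangements_succ, numDerangements_succ]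
    push_cast
    ring
end

section
/- Let k, l ≥ 2 be integers, set n = kl, and assume n > 4. Then there exists a prime p not dividing D_n such that ν_p((k!)^l · l!) < ν_p(n!). -/
/-!
Since `D (m + 1) = (m + 1) D m - (-1) ^ m`, if `p ∣ m` then `D m`, `D (m + 2)` and `D (m + 3)` are
`±1`, `±1` and `±2` modulo `p`; so a prime dividing `n` or `n - 2`, or an odd prime dividing
`n - 3`, does not divide `D n`.

The gap `ν_p((k l)!) - ν_p(k! ^ l * l!)` does not decrease in `l`, because
`(k l)! * k! * (l + 1) ∣ (k (l + 1))!`, and at `l = p` Legendre's formula makes it `s_p(k) - 1`,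
where `s_p` is the base-`p` digit sum; this is positive unless `k` is a power of `p`. For `l < p`
and `p ∤ k`, a carry in the last base-`p` digit of `(k mod p) * l` gives the strict inequality.

It remains to choose `p`: a prime factor of `n - 2` if `n` is odd; `2` if `k` is not a power of
two; an odd prime factor of `l` if `k` is a power of two and `l` has one; otherwise `k` and `l`
are powers of two and any prime factor of `n - 3` works.
-/

open Nat

section Derangements

variable {R : Type*} [CommRing R] {m : ℕ}

theorem numDerangements_succ_cast (n : ℕ) :
    (numDerangements (n + 1) : R) = (n + 1) * numDerangements n - (-1) ^ n := by
  have h := congrArg (Int.cast : ℤ → R) (numDerangements_succ n)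
  push_cast at h
  exact h

theorem numDerangements_cast_of_natCast_eq_zero (hm : (m : R) = 0) :
    (numDerangements m : R) = (-1) ^ m := by
  cases m with
  | zero => simp
  | succ r =>
    rw [numDerangements_succ_cast, ← Nat.cast_succ, hm]
    ring

theorem numDerangements_succ_cast_of_natCast_eq_zero (hm : (m : R) = 0) :
    (numDerangements (m + 1) : R) = 0 := by
  rw [numDerangements_succ_cast, hm, numDerangements_cast_of_natCast_eq_zero hm]
  ring

theorem numDerangements_add_two_cast_of_natCast_eq_zero (hm : (m : R) = 0) :
    (numDerangements (m + 2) : R) = (-1) ^ m := by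
  rw [numDerangements_succ_cast, numDerangements_succ_cast_of_natCast_eq_zero hm]
  ring

theorem numDerangements_add_three_cast_of_natCast_eq_zero (hm : (m : R) = 0) :
    (numDerangements (m + 3) : R) = 2 * (-1) ^ m := by
  rw [numDerangements_succ_cast, numDerangements_add_two_cast_of_natCast_eq_zero hm]
  push_cast
  rw [hm]
  ring

end Derangements

section NotDvdDerangements

variable {p m : ℕ}

theorem not_dvd_numDerangements_of_dvd (hp : p ≠ 1) (h : p ∣ m) :
    ¬ p ∣ numDerangements m := by
  have := ZMod.nontrivial_iff.2 hp
  rw [← ZMod.natCast_eq_zero_iff, numDerangements_cast_of_natCast_eq_zero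
    ((ZMod.natCast_eq_zero_iff m p).2 h)]
  exact (isUnit_one.neg.pow m).ne_zero

theorem not_dvd_numDerangements_add_two (hp : p ≠ 1) (h : p ∣ m) :
    ¬ p ∣ numDerangements (m + 2) := by
  have := ZMod.nontrivial_iff.2 hp
  rw [← ZMod.natCast_eq_zero_iff, numDerangements_add_two_cast_of_natCast_eq_zero
    ((ZMod.natCast_eq_zero_iff m p).2 h)]
  exact (isUnit_one.neg.pow m).ne_zero

theorem not_dvd_numDerangements_add_three (hp : ¬ p ∣ 2) (h : p ∣ m) :
    ¬ p ∣ numDerangements (m + 3) := by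
  rw [← ZMod.natCast_eq_zero_iff, numDerangements_add_three_cast_of_natCast_eq_zero
    ((ZMod.natCast_eq_zero_iff m p).2 h), (isUnit_one.neg.pow m).mul_left_eq_zero]
  exact_mod_cast (ZMod.natCast_eq_zero_iff 2 p).not.2 hp

end NotDvdDerangements

theorem digits_sum_pos (b : ℕ) {n : ℕ} (hn : n ≠ 0) : 0 < (b.digits n).sum :=
  List.sum_pos_iff_exists_pos_nat.2 ⟨_, List.getLast_mem (digits_ne_nil_iff_ne_zero.2 hn),
    Nat.pos_of_ne_zero (getLast_digit_ne_zero b hn)⟩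

theorem two_le_digits_sum_of_ne_pow {b k : ℕ} (hb : 1 < b) (hk : k ≠ 0)
    (hpow : ∀ a, k ≠ b ^ a) : 2 ≤ (b.digits k).sum := by
  induction k using Nat.strong_induction_on with
  | _ k ih =>
  rw [digits_def' hb (Nat.pos_of_ne_zero hk), List.sum_cons]
  by_cases hq : k / b = 0
  · have hkb : k < b := (Nat.div_eq_zero_iff_lt (by omega)).1 hq
    have := hpow 0
    simp only [hq, digits_zero, List.sum_nil, Nat.mod_eq_of_lt hkb, pow_zero] at this ⊢
    omega
  by_cases hr : k % b = 0
  · have hdiv : k / b * b = k := Nat.div_mul_cancel (Nat.dvd_of_mod_eq_zero hr)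
    have := ih (k / b) (Nat.div_lt_self (Nat.pos_of_ne_zero hk) hb) hq
      fun a ha => hpow (a + 1) (by rw [pow_succ, ← ha, hdiv])
    omega
  · have := digits_sum_pos b hq
    omega

theorem ne_pow_of_not_dvd {p k : ℕ} (hk : 2 ≤ k) (h : ¬ p ∣ k) : ∀ a, k ≠ p ^ a := by
  rintro (_ | a) rfl
  · simp at hk
  · exact h (dvd_pow_self p a.succ_ne_zero)

theorem factorial_mul_factorial_mul_succ_dvd {k : ℕ} (hk : k ≠ 0) (l : ℕ) :
    (k * l)! * k ! * (l + 1) ∣ (k * (l + 1))! := by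
  obtain ⟨m, rfl⟩ := Nat.exists_eq_add_one_of_ne_zero hk
  have hchoose :
      ((m + 1) * l + (m + 1)).choose (m + 1) = (l + 1) * ((m + 1) * l + m).choose m := by
    apply Nat.eq_of_mul_eq_mul_right (by omega : 0 < m + 1)
    rw [show (m + 1) * l + (m + 1) = (m + 1) * l + m + 1 by ring, ← add_one_mul_choose_eq]
    ring
  rw [show (m + 1) * (l + 1) = (m + 1) * l + (m + 1) by ring,
    ← add_choose_mul_factorial_mul_factorial ((m + 1) * l) (m + 1), hchoose]
  exact Dvd.intro (((m + 1) * l + m).choose m) (by ring)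

section Valuation

variable {p k l : ℕ} [hp : Fact p.Prime]

theorem padicValNat_pow_factorial_mul_factorial_self_lt (hk : k ≠ 0) (hpow : ∀ a, k ≠ p ^ a) :
    padicValNat p (k ! ^ p * p !) < padicValNat p (k * p)! := by
  have hfac : padicValNat p p ! = 1 := by
    simpa using padicValNat_factorial_mul (p := p) 1
  rw [padicValNat.mul (pow_ne_zero _ (factorial_ne_zero k)) (factorial_ne_zero p),
    padicValNat.pow, hfac, mul_comm k, padicValNat_factorial_mul]
  have hdigits := two_le_digits_sum_of_ne_pow hp.out.one_lt hk hpow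
  have hlegendre := sub_one_mul_padicValNat_factorial (p := p) k
  have hle := digit_sum_le p k
  obtain ⟨q, rfl⟩ := Nat.exists_eq_add_one_of_ne_zero hp.out.ne_zero
  simp only [add_tsub_cancel_right] at hlegendre
  rw [add_mul, one_mul]
  omega

theorem padicValNat_pow_factorial_mul_factorial_lt_succ (hk : k ≠ 0)
    (h : padicValNat p (k ! ^ l * l !) < padicValNat p (k * l)!) :
    padicValNat p (k ! ^ (l + 1) * (l + 1)!) < padicValNat p (k * (l + 1))! := by
  obtain ⟨c, hc⟩ := factorial_mul_factorial_mul_succ_dvd hk l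
  have hc0 : c ≠ 0 := by
    rintro rfl
    exact factorial_ne_zero _ (by simpa using hc)
  rw [hc, show k ! ^ (l + 1) * (l + 1)! = k ! ^ l * l ! * k ! * (l + 1) by
      rw [factorial_succ]; ring]
  simp only [padicValNat.mul, padicValNat.pow, ne_eq, mul_eq_zero, pow_eq_zero_iff',
    factorial_ne_zero, hc0, add_one_ne_zero, not_false_eq_true, false_and, or_self] at h ⊢
  omega

theorem padicValNat_pow_factorial_mul_factorial_lt_of_le (hk : k ≠ 0) (hpow : ∀ a, k ≠ p ^ a)
    (hl : p ≤ l) : padicValNat p (k ! ^ l * l !) < padicValNat p (k * l)! := by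
  induction l, hl using Nat.le_induction with
  | base => exact padicValNat_pow_factorial_mul_factorial_self_lt hk hpow
  | succ l _ ih => exact padicValNat_pow_factorial_mul_factorial_lt_succ hk ih

theorem mul_padicValNat_factorial_lt (h : p ≤ k % p * l) :
    l * padicValNat p k ! < padicValNat p (k * l)! := by
  have hp1 := hp.out.one_lt
  have hl : 0 < l := Nat.pos_of_ne_zero (by rintro rfl; simp at h; omega)
  have hkl : p ≤ k * l := h.trans (Nat.mul_le_mul_right l (Nat.mod_le k p))
  have hlogk : log p k < log p (k * l) + 1 :=
    Nat.lt_add_one_of_le (log_mono_right (Nat.le_mul_of_pos_right k hl))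
  rw [padicValNat_factorial hlogk, padicValNat_factorial (lt_add_one _), Finset.mul_sum]
  refine Finset.sum_lt_sum (fun i _ => mul_comm k l ▸ Nat.mul_div_le_mul_div_assoc l k (p ^ i))
    ⟨1, Finset.mem_Ico.2 ⟨le_rfl, by have := Nat.log_pos hp1 hkl; omega⟩, ?_⟩
  have hsplit : k * l / p = l * (k / p) + k % p * l / p := by
    conv_lhs => rw [← Nat.div_add_mod k p]
    rw [show (p * (k / p) + k % p) * l = p * (l * (k / p)) + k % p * l by ring,
      Nat.mul_add_div (by omega)]
  have hcarry : 1 ≤ k % p * l / p := (Nat.one_le_div_iff (by omega)).2 h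
  rw [pow_one]
  omega

theorem padicValNat_pow_factorial_mul_factorial_lt_of_dvd_sub {c : ℕ} (hk : 2 ≤ k) (hc0 : 0 < c)
    (hcp : c < p) (hc : c ≤ k * l) (hdvd : p ∣ k * l - c) (hne : k % p * l ≠ c) :
    padicValNat p (k ! ^ l * l !) < padicValNat p (k * l)! := by
  have hpk : ¬ p ∣ k := fun h => by
    have hpc : p ∣ c := by
      simpa [Nat.sub_sub_self hc] using Nat.dvd_sub (dvd_mul_of_dvd_left h l) hdvd
    exact absurd (Nat.le_of_dvd hc0 hpc) (by omega)
  by_cases hlp : p ≤ l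
  · exact padicValNat_pow_factorial_mul_factorial_lt_of_le (by omega)
      (ne_pow_of_not_dvd hk hpk) hlp
  have hmod : k * l % p = c := Eq.trans ((Nat.modEq_iff_dvd' hc).2 hdvd).symm (Nat.mod_eq_of_lt hcp)
  have hcarry : p ≤ k % p * l := by
    by_contra! hlt
    exact hne (by rw [← Nat.mod_eq_of_lt hlt, Nat.mod_mul_mod, hmod])
  have hl! : padicValNat p l ! = 0 :=
    padicValNat.eq_zero_of_not_dvd (hp.out.dvd_factorial.not.2 hlp)
  rw [padicValNat.mul (pow_ne_zero _ (factorial_ne_zero k)) (factorial_ne_zero l),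
    padicValNat.pow, hl!, add_zero]
  exact mul_padicValNat_factorial_lt hcarry

end Valuation

theorem exists_prime_of_not_two_dvd {k l : ℕ} (hk : 2 ≤ k) (hl : 2 ≤ l)
    (hodd : ¬ 2 ∣ k * l) :
    ∃ p : ℕ, p.Prime ∧ ¬ p ∣ numDerangements (k * l) ∧
      padicValNat p (k ! ^ l * l !) < padicValNat p (k * l)! := by
  have hk3 : 3 ≤ k := by
    by_contra! h
    exact hodd (dvd_mul_of_dvd_left (by interval_cases k; norm_num) l)
  have hl3 : 3 ≤ l := by
    by_contra! h
    exact hodd (dvd_mul_of_dvd_right (by interval_cases l; norm_num) k)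
  have hkl : 9 ≤ k * l := by nlinarith
  obtain ⟨p, hp, hdvd⟩ := Nat.exists_prime_and_dvd (show k * l - 2 ≠ 1 by omega)
  have hp2 : 2 < p := by
    rcases hp.eq_two_or_odd with rfl | h
    · omega
    · have := hp.two_le
      omega
  have := Fact.mk hp
  refine ⟨p, hp, ?_, padicValNat_pow_factorial_mul_factorial_lt_of_dvd_sub hk two_pos hp2
    (by omega) hdvd ?_⟩
  · rw [show k * l = k * l - 2 + 2 by omega]
    exact not_dvd_numDerangements_add_two hp.ne_one hdvd
  · rcases Nat.eq_zero_or_pos (k % p) with h | h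
    · simp [h]
    · nlinarith

theorem exists_prime_of_two_dvd_of_not_three_dvd {k l : ℕ} (hk : 2 ≤ k) (hl : 2 ∣ l)
    (h3 : ¬ 3 ∣ k * l) (h4 : 4 < k * l) :
    ∃ p : ℕ, p.Prime ∧ ¬ p ∣ numDerangements (k * l) ∧
      padicValNat p (k ! ^ l * l !) < padicValNat p (k * l)! := by
  obtain ⟨p, hp, hdvd⟩ := Nat.exists_prime_and_dvd (show k * l - 3 ≠ 1 by omega)
  have h2 : 2 ∣ k * l := dvd_mul_of_dvd_right hl k
  have hp3 : 3 < p := by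
    have := hp.two_le
    rcases hp.eq_two_or_odd with rfl | hodd
    · omega
    · rcases (show p = 3 ∨ 3 < p by omega) with rfl | h
      · omega
      · exact h
  have := Fact.mk hp
  refine ⟨p, hp, ?_, padicValNat_pow_factorial_mul_factorial_lt_of_dvd_sub hk three_pos hp3
    (by omega) hdvd ?_⟩
  · rw [show k * l = k * l - 3 + 3 by omega]
    refine not_dvd_numDerangements_add_three (fun h => ?_) hdvd
    have := Nat.le_of_dvd two_pos h
    omega
  · intro h
    have : 2 ∣ k % p * l := dvd_mul_of_dvd_right hl _
    omega

theorem exists_prime_strict_valuation_imprimitive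
    (k l : ℕ) (hk : 2 ≤ k) (hl : 2 ≤ l) (n : ℕ) (hn : n = k * l) (hn4 : 4 < n) :
    ∃ p : ℕ, p.Prime ∧ ¬ p ∣ numDerangements n ∧
      padicValNat p ((Nat.factorial k) ^ l * Nat.factorial l) < padicValNat p (Nat.factorial n) := by
  subst hn
  by_cases h2 : 2 ∣ k * l
  swap
  · exact exists_prime_of_not_two_dvd hk hl h2
  have := Fact.mk Nat.prime_two
  by_cases hk2 : ∃ a, k = 2 ^ a
  swap
  · push Not at hk2
    exact ⟨2, Nat.prime_two, not_dvd_numDerangements_of_dvd (by norm_num) h2,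
      padicValNat_pow_factorial_mul_factorial_lt_of_le (by omega) hk2 hl⟩
  obtain ⟨a, rfl⟩ := hk2
  have hodd_not_dvd : ∀ p, p.Prime → p ≠ 2 → ¬ p ∣ 2 ^ a := fun p hp hp2 h =>
    hp2 ((Nat.prime_dvd_prime_iff_eq hp Nat.prime_two).1 (hp.dvd_of_dvd_pow h))
  by_cases hl2 : ∃ p, p.Prime ∧ p ∣ l ∧ p ≠ 2
  · obtain ⟨p, hp, hpl, hp2⟩ := hl2
    have := Fact.mk hp
    exact ⟨p, hp, not_dvd_numDerangements_of_dvd hp.ne_one (dvd_mul_of_dvd_right hpl _),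
      padicValNat_pow_factorial_mul_factorial_lt_of_le (by positivity)
        (ne_pow_of_not_dvd hk (hodd_not_dvd p hp hp2)) (Nat.le_of_dvd (by omega) hpl)⟩
  push Not at hl2
  have h2l : 2 ∣ l := by
    obtain ⟨q, hq, hql⟩ := Nat.exists_prime_and_dvd (show l ≠ 1 by omega)
    exact hl2 q hq hql ▸ hql
  have h3 : ¬ 3 ∣ 2 ^ a * l := by
    rw [Nat.prime_three.dvd_mul]
    rintro (h | h)
    · exact hodd_not_dvd 3 Nat.prime_three (by norm_num) h
    · exact absurd (hl2 3 Nat.prime_three h) (by norm_num)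
  exact exists_prime_of_two_dvd_of_not_three_dvd hk h2l h3 hn4
end

section
/- For every n ≥ 1, twice the number of even derangements in S_n equals D_n + (−1)^{n−1}(n−1); that is, 2 · |{σ ∈ A_n : σ has no fixed points}| = D_n + (−1)^{n−1}(n−1). In particular, the proportion of derangements in A_n equals (D_n + (−1)^{n−1}(n−1)) / n!. -/
/-!
By the Leibniz formula, `∑ sign σ` over the derangements `σ` of an `n`-element set is
`det (J - I)`: the product `∏ᵢ (J - I)_{σ i, i}` is `1` when `σ` is a derangement and `0`
otherwise. Since `J - I = -(I - 𝟙 𝟙ᵀ)`, the matrix determinant lemma gives `(-1)ⁿ (1 - n)`.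
The even minus the odd derangements is therefore `(-1)ⁿ⁻¹ (n - 1)`, while their sum is `Dₙ`.
-/

open Equiv Finset

namespace Matrix

variable {ι R : Type*} [Fintype ι] [DecidableEq ι] [CommRing R]

theorem det_of_ite_eq_zero_one :
    (of fun i j : ι => if i = j then (0 : R) else 1).det
      = (-1) ^ Fintype.card ι * (1 - Fintype.card ι) := by
  have h : (of fun i j : ι => if i = j then (0 : R) else 1)
      = -(1 + replicateCol Unit (fun _ => (-1 : R)) * replicateRow Unit (fun _ => (1 : R))) := by
    ext i j
    by_cases hij : i = j <;> simp [mul_apply, hij]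
  rw [h, det_neg, det_one_add_replicateCol_mul_replicateRow]
  simp [dotProduct, sub_eq_add_neg]

end Matrix

theorem Int.sum_coe_units_eq_two_mul_card_filter_sub_card {ι : Type*} (s : Finset ι)
    (f : ι → ℤˣ) : ∑ i ∈ s, (f i : ℤ) = 2 * #{i ∈ s | f i = 1} - #s := by
  have hone : ∑ i ∈ s with f i = 1, (f i : ℤ) = #{i ∈ s | f i = 1} := by
    rw [sum_congr rfl fun i hi => by rw [(mem_filter.mp hi).2]]
    simp
  have hneg : ∑ i ∈ s with ¬f i = 1, (f i : ℤ) = -#{i ∈ s | ¬f i = 1} := by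
    rw [sum_congr rfl fun i hi => by rw [Int.units_ne_iff_eq_neg.mp (mem_filter.mp hi).2]]
    simp
  rw [← sum_filter_add_sum_filter_not s (f · = 1), hone, hneg,
    ← card_filter_add_card_filter_not (s := s) (f · = 1)]
  push_cast
  ring

section

variable {α : Type*} [Fintype α] [DecidableEq α]

theorem sum_sign_derangements_eq_det :
    ∑ σ ∈ (derangements α).toFinset, (Perm.sign σ : ℤ)
      = (Matrix.of fun i j : α => if i = j then (0 : ℤ) else 1).det := by
  rw [Matrix.det_apply, ← sum_subset (subset_univ (derangements α).toFinset)]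
  · refine sum_congr rfl fun σ hσ => ?_
    have hσ : ∀ x, σ x ≠ x := Set.mem_toFinset.mp hσ
    simp [hσ, Units.smul_def]
  · intro σ _ hσ
    obtain ⟨x, hx⟩ : ∃ x, σ x = x := not_forall_not.mp fun h => hσ (Set.mem_toFinset.mpr h)
    rw [prod_eq_zero (mem_univ x) (by simp [hx]), smul_zero]

theorem sum_sign_derangements :
    ∑ σ ∈ (derangements α).toFinset, (Perm.sign σ : ℤ)
      = (-1) ^ Fintype.card α * (1 - Fintype.card α) := by
  rw [sum_sign_derangements_eq_det, Matrix.det_of_ite_eq_zero_one]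

theorem two_mul_ncard_alternatingGroup_inter_derangements :
    2 * (((alternatingGroup α : Set (Perm α)) ∩ derangements α).ncard : ℤ)
      = numDerangements (Fintype.card α)
        + (-1) ^ Fintype.card α * (1 - Fintype.card α) := by
  have heven : ((alternatingGroup α : Set (Perm α)) ∩ derangements α).ncard
      = #{σ ∈ (derangements α).toFinset | Perm.sign σ = 1} := by
    rw [← Set.ncard_coe_finset]
    congr 1
    ext σ
    simp [Perm.mem_alternatingGroup, and_comm]
  rw [heven, ← card_derangements_eq_numDerangements, ← Set.toFinset_card,
    ← sum_sign_derangements, Int.sum_coe_units_eq_two_mul_card_filter_sub_card]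
  ring

theorem ncard_alternatingGroup_inter_derangements_div_card [Nonempty α] :
    (((alternatingGroup α : Set (Perm α)) ∩ derangements α).ncard : ℚ)
        / Nat.card (alternatingGroup α)
      = 2 * (((alternatingGroup α : Set (Perm α)) ∩ derangements α).ncard : ℚ)
        / (Fintype.card α).factorial := by
  rcases subsingleton_or_nontrivial α with hα | hα
  · have hempty : derangements α = ∅ :=
      Set.eq_empty_of_forall_notMem fun σ hσ => hσ (Classical.arbitrary α) (Subsingleton.elim _ _)
    simp [hempty]
  · rw [← Fintype.card_perm, ← two_mul_card_alternatingGroup, Nat.card_eq_fintype_card,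
      Nat.cast_mul, Nat.cast_two, mul_div_mul_left _ _ two_ne_zero]

end

theorem two_mul_even_derangements (n : ℕ) (hn : 1 ≤ n) :
    2 * ({σ : Equiv.Perm (Fin n) | σ ∈ alternatingGroup (Fin n) ∧ ∀ x, σ x ≠ x}.ncard : ℤ)
      = (numDerangements n : ℤ) + (-1) ^ (n - 1) * ((n : ℤ) - 1) ∧
    (({σ : Equiv.Perm (Fin n) | σ ∈ alternatingGroup (Fin n) ∧ ∀ x, σ x ≠ x}.ncard : ℚ)
        / (Nat.card (alternatingGroup (Fin n)) : ℚ)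
      = ((numDerangements n : ℚ) + (-1) ^ (n - 1) * ((n : ℚ) - 1)) / (Nat.factorial n : ℚ)) := by
  have : Nonempty (Fin n) := ⟨⟨0, hn⟩⟩
  have hcount := two_mul_ncard_alternatingGroup_inter_derangements (α := Fin n)
  have hratio := ncard_alternatingGroup_inter_derangements_div_card (α := Fin n)
  have hsign : (-1 : ℤ) ^ n * (1 - n) = (-1) ^ (n - 1) * (n - 1) := by
    obtain ⟨m, rfl⟩ := Nat.exists_eq_add_of_le' hn
    push_cast
    ring
  rw [Fintype.card_fin, hsign] at hcount
  rw [Fintype.card_fin] at hratio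
  refine ⟨hcount, hratio.trans ?_⟩
  congr 1
  exact_mod_cast hcount
end

section
/- For every n ≥ 2, twice the number of odd derangements in S_n equals D_n + (−1)^n (n−1); that is, 2 · |{σ ∈ S_n \ A_n : σ has no fixed points}| = D_n + (−1)^n (n−1). In particular, for n ≥ 2 the proportion of derangements in the nontrivial coset S_n \ A_n of A_n differs from D_n / n!. -/
open Equiv Finset

-- determinant computation
lemma detM (n : ℕ) :
    (Matrix.of fun i j : Fin n => if i = j then (0:ℤ) else 1).det = (-1)^n * (1 - n) := by
  have h : (Matrix.of fun i j : Fin n => if i = j then (0:ℤ) else 1)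
      = (-1 : ℤ) • (1 + Matrix.replicateCol Unit (fun _ : Fin n => (-1:ℤ)) * Matrix.replicateRow Unit (fun _ : Fin n => (1:ℤ))) := by
    ext i j
    by_cases h : i = j <;>
      simp [h, Matrix.one_apply, Matrix.mul_apply, Matrix.replicateCol, Matrix.replicateRow]
  rw [h, Matrix.det_smul, Matrix.det_one_add_replicateCol_mul_replicateRow]
  simp [dotProduct, mul_comm]
  ring

lemma sum_sign_derangements_s10 (n : ℕ) :
    ∑ σ : Perm (Fin n), (if ∀ x, σ x ≠ x then (Perm.sign σ : ℤ) else 0)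
      = (-1)^n * (1 - n) := by
  rw [← detM n, Matrix.det_apply']
  refine Finset.sum_congr rfl fun σ _ => ?_
  by_cases h : ∀ x, σ x ≠ x
  · rw [if_pos h, Finset.prod_eq_one fun i _ => by simp [h i], mul_one]; rfl
  · push_neg at h
    obtain ⟨x, hx⟩ := h
    rw [if_neg (by push_neg; exact ⟨x, hx⟩),
      Finset.prod_eq_zero (Finset.mem_univ x) (by simp [hx]), mul_zero]

lemma ncard_setOf {α : Type*} [Fintype α] (p : α → Prop) [DecidablePred p] :
    {x | p x}.ncard = (Finset.univ.filter p).card := by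
  rw [← Set.ncard_coe_finset]
  congr 1
  ext x
  simp

theorem two_mul_odd_derangements (n : ℕ) (hn : 2 ≤ n) :
    2 * ({σ : Equiv.Perm (Fin n) | σ ∉ alternatingGroup (Fin n) ∧ ∀ x, σ x ≠ x}.ncard : ℤ)
      = (numDerangements n : ℤ) + (-1) ^ n * ((n : ℤ) - 1) ∧
    (({σ : Equiv.Perm (Fin n) | σ ∉ alternatingGroup (Fin n) ∧ ∀ x, σ x ≠ x}.ncard : ℚ)
        / (({σ : Equiv.Perm (Fin n) | σ ∉ alternatingGroup (Fin n)}.ncard : ℚ))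
      ≠ (numDerangements n : ℚ) / (Nat.factorial n : ℚ)) := by
  classical
  have hnt : Nontrivial (Fin n) := Fin.nontrivial_iff_two_le.mpr hn
  set A := alternatingGroup (Fin n) with hA
  set O := (Finset.univ.filter fun σ : Perm (Fin n) => σ ∉ A ∧ ∀ x, σ x ≠ x).card with hOdef
  have hO : {σ : Perm (Fin n) | σ ∉ A ∧ ∀ x, σ x ≠ x}.ncard = O := ncard_setOf _
  -- derangement count
  have hD : (Finset.univ.filter fun σ : Perm (Fin n) => ∀ x, σ x ≠ x).card
      = numDerangements n := by
    rw [← card_derangements_fin_eq_numDerangements, Fintype.card_eq_nat_card,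
      Nat.card_coe_set_eq,
      show derangements (Fin n) = {σ : Perm (Fin n) | ∀ x, σ x ≠ x} from rfl, ncard_setOf]
  -- part 1
  have key : 2 * (O : ℤ) = (numDerangements n : ℤ) + (-1) ^ n * ((n : ℤ) - 1) := by
    have h1 : ∑ σ : Perm (Fin n),
        ((if ∀ x, σ x ≠ x then (1:ℤ) else 0) - (if ∀ x, σ x ≠ x then (Perm.sign σ : ℤ) else 0))
        = 2 * (O : ℤ) := by
      rw [show 2 * (O : ℤ) = ∑ σ ∈ (Finset.univ.filter
          fun σ : Perm (Fin n) => σ ∉ A ∧ ∀ x, σ x ≠ x), (2:ℤ) by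
        rw [Finset.sum_const, nsmul_eq_mul, hOdef]; ring]
      rw [Finset.sum_filter]
      refine Finset.sum_congr rfl fun σ _ => ?_
      by_cases hp : ∀ x, σ x ≠ x
      · by_cases hmem : σ ∈ A
        · have hs : (Perm.sign σ : ℤ) = 1 := by
            rw [Equiv.Perm.mem_alternatingGroup.mp hmem]; rfl
          simp [hp, hmem, hs]
        · have hs : (Perm.sign σ : ℤ) = -1 := by
            rcases Int.units_eq_one_or (Perm.sign σ) with h | h
            · exact absurd (Equiv.Perm.mem_alternatingGroup.mpr h) hmem
            · rw [h]; rfl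
          simp [hp, hmem, hs]
      · simp [hp]
    rw [Finset.sum_sub_distrib, sum_sign_derangements_s10] at h1
    have h2 : ∑ σ : Perm (Fin n), (if ∀ x, σ x ≠ x then (1:ℤ) else 0)
        = (numDerangements n : ℤ) := by
      rw [Finset.sum_boole, ← hD]
    rw [h2] at h1
    rw [← h1]; ring
  refine ⟨by rw [hO]; exact key, ?_⟩
  -- part 2
  set C := (Finset.univ.filter fun σ : Perm (Fin n) => σ ∉ A).card with hCdef
  have hC : {σ : Perm (Fin n) | σ ∉ A}.ncard = C := ncard_setOf _
  have h2C : 2 * C = n.factorial := by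
    have hfil : (Finset.univ.filter fun σ : Perm (Fin n) => σ ∈ A).card
        = Fintype.card A := by
      rw [Fintype.card_eq_nat_card]
      show _ = Nat.card (A : Set (Perm (Fin n)))
      rw [Nat.card_coe_set_eq, ← Set.ncard_coe_finset]
      congr 1
      ext σ
      simp
    have hsum : (Finset.univ.filter fun σ : Perm (Fin n) => σ ∈ A).card + C
        = Fintype.card (Perm (Fin n)) := by
      rw [hCdef, Finset.card_filter_add_card_filter_not, Finset.card_univ]
    have h2A : 2 * Fintype.card A = Fintype.card (Perm (Fin n)) :=
      two_mul_card_alternatingGroup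
    have hcardP : Fintype.card (Perm (Fin n)) = n.factorial := by
      rw [Fintype.card_perm, Fintype.card_fin]
    omega
  rw [hO, hC]
  intro heq
  have hCpos : 0 < C := by
    have := Nat.factorial_pos n; omega
  have hFpos : 0 < n.factorial := Nat.factorial_pos n
  have hC0 : (C : ℚ) ≠ 0 := by positivity
  have hF0 : ((n.factorial : ℚ)) ≠ 0 := by positivity
  rw [div_eq_div_iff hC0 hF0] at heq
  have h2Q : (2 : ℚ) * C = (n.factorial : ℚ) := by exact_mod_cast h2C
  have keyQ : 2 * (O : ℚ) = (numDerangements n : ℚ) + (-1) ^ n * ((n : ℚ) - 1) := by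
    exact_mod_cast key
  have : ((-1 : ℚ)) ^ n * ((n : ℚ) - 1) = 0 := by
    have hOD : 2 * (O : ℚ) = (numDerangements n : ℚ) := by
      have := congrArg (fun x : ℚ => 2 * x) heq
      rw [show (2:ℚ) * ((O:ℚ) * n.factorial) = (2 * (O:ℚ)) * n.factorial by ring,
        show (2:ℚ) * ((numDerangements n : ℚ) * C) = (numDerangements n : ℚ) * (2 * C) by ring,
        h2Q] at this
      exact mul_right_cancel₀ hF0 this
    linarith [keyQ, hOD]
  have hne : ((-1 : ℚ)) ^ n * ((n : ℚ) - 1) ≠ 0 := by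
    apply mul_ne_zero
    · exact pow_ne_zero _ (by norm_num)
    · have : (2:ℚ) ≤ (n:ℚ) := by exact_mod_cast hn
      linarith
  exact hne this
end

section
/- Let E_n := D_n + (−1)^{n−1}(n−1). Then: for every n ≥ 1, n divides E_n − 2(−1)^n; for every n ≥ 4, n − 3 divides E_n − 4(−1)^{n−1}; for every n ≥ 5, n − 4 divides E_n − 6(−1)^n; and for every n ≥ 6, n − 5 divides E_n − 48(−1)^{n−1} (all as integers). -/
theorem E_n_special_congruences :
    (∀ n : ℕ, 1 ≤ n →
      (n : ℤ) ∣ (((numDerangements n : ℤ) + (-1) ^ (n - 1) * ((n : ℤ) - 1)) - 2 * (-1) ^ n)) ∧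
    (∀ n : ℕ, 4 ≤ n →
      ((n : ℤ) - 3) ∣ (((numDerangements n : ℤ) + (-1) ^ (n - 1) * ((n : ℤ) - 1)) - 4 * (-1) ^ (n - 1))) ∧
    (∀ n : ℕ, 5 ≤ n →
      ((n : ℤ) - 4) ∣ (((numDerangements n : ℤ) + (-1) ^ (n - 1) * ((n : ℤ) - 1)) - 6 * (-1) ^ n)) ∧
    (∀ n : ℕ, 6 ≤ n →
      ((n : ℤ) - 5) ∣ (((numDerangements n : ℤ) + (-1) ^ (n - 1) * ((n : ℤ) - 1)) - 48 * (-1) ^ (n - 1))) := by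
  refine ⟨?_, ?_, ?_, ?_⟩
  · intro n hn
    obtain ⟨m, rfl⟩ : ∃ m, n = m + 1 := ⟨n - 1, by omega⟩
    rw [show m + 1 - 1 = m by omega, numDerangements_succ]
    refine ⟨(numDerangements m : ℤ) + (-1) ^ m, ?_⟩
    push_cast
    ring
  · intro n hn
    obtain ⟨m, rfl⟩ : ∃ m, n = m + 4 := ⟨n - 4, by omega⟩
    rw [show m + 4 - 1 = m + 3 by omega,
      show m + 4 = m + 3 + 1 by omega, numDerangements_succ,
      show m + 3 = m + 2 + 1 by omega, numDerangements_succ,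
      show m + 2 = m + 1 + 1 by omega, numDerangements_succ,
      numDerangements_succ]
    refine ⟨(numDerangements m : ℤ) * ((m : ℤ) ^ 3 + 9 * m ^ 2 + 26 * m + 24)
      - (-1) ^ m * ((m : ℤ) ^ 2 + 7 * m + 14), ?_⟩
    push_cast
    ring
  · intro n hn
    obtain ⟨m, rfl⟩ : ∃ m, n = m + 5 := ⟨n - 5, by omega⟩
    rw [show m + 5 - 1 = m + 4 by omega,
      show m + 5 = m + 4 + 1 by omega, numDerangements_succ,
      show m + 4 = m + 3 + 1 by omega, numDerangements_succ,
      show m + 3 = m + 2 + 1 by omega, numDerangements_succ,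
      show m + 2 = m + 1 + 1 by omega, numDerangements_succ,
      numDerangements_succ]
    refine ⟨(numDerangements m : ℤ) * ((m : ℤ) ^ 4 + 14 * m ^ 3 + 71 * m ^ 2 + 154 * m + 120)
      - (-1) ^ m * ((m : ℤ) ^ 3 + 12 * m ^ 2 + 48 * m + 66), ?_⟩
    push_cast
    ring
  · intro n hn
    obtain ⟨m, rfl⟩ : ∃ m, n = m + 6 := ⟨n - 6, by omega⟩
    rw [show m + 6 - 1 = m + 5 by omega,
      show m + 6 = m + 5 + 1 by omega, numDerangements_succ,
      show m + 5 = m + 4 + 1 by omega, numDerangements_succ,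
      show m + 4 = m + 3 + 1 by omega, numDerangements_succ,
      show m + 3 = m + 2 + 1 by omega, numDerangements_succ,
      show m + 2 = m + 1 + 1 by omega, numDerangements_succ,
      numDerangements_succ]
    refine ⟨(numDerangements m : ℤ) * ((m : ℤ) ^ 5 + 20 * m ^ 4 + 155 * m ^ 3 + 580 * m ^ 2 + 1044 * m + 720)
      - (-1) ^ m * ((m : ℤ) ^ 4 + 18 * m ^ 3 + 120 * m ^ 2 + 355 * m + 412), ?_⟩
    push_cast
    ring
end

section
/- Let u, v ≥ 1 be integers with u + v = n, suppose 4 divides n, and set s = ν_2(n) (so s ≥ 2). If s_2(u) + s_2(v) = s_2(n) + 1 (i.e., there is exactly one carry operation in the addition u + v in base 2), then 2^{s−1} divides both u and v. -/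
/-!
By Kummer's theorem the number of carries in the binary addition `u + v` is `ν₂ (choose n u)`,
so the hypothesis says `ν₂ (choose n u) = 1`. Since `n` divides `choose n u * u`, this forces
`ν₂ n ≤ 1 + ν₂ u`, and symmetrically for `v`.
-/

open Nat

lemma padicValNat_le_padicValNat_choose_add {p n k : ℕ} [Fact p.Prime] (hk : k ≠ 0)
    (hkn : k ≤ n) : padicValNat p n ≤ padicValNat p (n.choose k) + padicValNat p k := by
  obtain ⟨j, rfl⟩ := exists_eq_succ_of_ne_zero hk
  obtain ⟨m, rfl⟩ := exists_eq_succ_of_ne_zero (by omega : n ≠ 0)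
  have hchoose : m.choose j ≠ 0 := (choose_pos (by omega)).ne'
  calc padicValNat p (m + 1)
      ≤ padicValNat p ((m + 1) * m.choose j) := by
        rw [padicValNat.mul (succ_ne_zero m) hchoose]; exact le_add_right le_rfl
    _ = padicValNat p ((m + 1).choose (j + 1) * (j + 1)) := by rw [add_one_mul_choose_eq]
    _ = padicValNat p ((m + 1).choose (j + 1)) + padicValNat p (j + 1) :=
        padicValNat.mul (choose_pos (by omega)).ne' (succ_ne_zero j)

lemma pow_padicValNat_sub_one_dvd_of_padicValNat_choose_eq_one {p n k : ℕ} [Fact p.Prime]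
    (hkn : k ≤ n) (hchoose : padicValNat p (n.choose k) = 1) :
    p ^ (padicValNat p n - 1) ∣ k := by
  have hk : k ≠ 0 := by rintro rfl; simp at hchoose
  have := padicValNat_le_padicValNat_choose_add (p := p) hk hkn
  exact (pow_dvd_pow p (by omega)).trans pow_padicValNat_dvd

lemma padicValNat_two_choose_add (u v : ℕ) :
    padicValNat 2 ((u + v).choose u) =
      (digits 2 u).sum + (digits 2 v).sum - (digits 2 (u + v)).sum := by
  simpa only [add_comm v u, Nat.reduceSub, one_mul] using
    sub_one_mul_padicValNat_choose_eq_sub_sum_digits' (p := 2) (k := u) (n := v)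

theorem one_carry_implies_divisibility_general (n u v s : ℕ)
    (huv : u + v = n) (hs : s = padicValNat 2 n)
    (hdig : (Nat.digits 2 u).sum + (Nat.digits 2 v).sum = (Nat.digits 2 n).sum + 1) :
    2 ^ (s - 1) ∣ u ∧ 2 ^ (s - 1) ∣ v := by
  subst huv hs
  have hu : padicValNat 2 ((u + v).choose u) = 1 := by
    rw [padicValNat_two_choose_add]; omega
  have hv : padicValNat 2 ((u + v).choose v) = 1 := by rwa [← choose_symm_add]
  exact ⟨pow_padicValNat_sub_one_dvd_of_padicValNat_choose_eq_one (le_add_right le_rfl) hu,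
    pow_padicValNat_sub_one_dvd_of_padicValNat_choose_eq_one (le_add_left le_rfl) hv⟩

theorem one_carry_implies_divisibility (n u v s : ℕ) (hu : 1 ≤ u) (hv : 1 ≤ v)
    (huv : u + v = n) (h4 : 4 ∣ n) (hs : s = padicValNat 2 n)
    (hdig : (Nat.digits 2 u).sum + (Nat.digits 2 v).sum = (Nat.digits 2 n).sum + 1) :
    2 ^ (s - 1) ∣ u ∧ 2 ^ (s - 1) ∣ v :=
  one_carry_implies_divisibility_general n u v s huv hs hdig
end
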